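/- arXiv:1102.1400 — 4 statements merged into one kernel-verified Lean document; each statement's English description precedes it below -/
import Mathlib

section
/- Let 0 < p < 1/2, λ ∈ ℝ, and fix (x₀,y₀,z₀) ∈ H. Then the Riemann function V satisfies on the face x = x₀ the characteristic condition ∂V/∂y (x₀,y,z) = −(p/(x₀−y−z)) V(x₀,y,z) for all (y,z) with y₀ ≤ y, z₀ ≤ z and y + z < x₀. -/
open Real MeasureTheory Filter Topology

noncomputable section

/-- Pochhammer symbol `(a)_n = a (a+1) ⋯ (a+n-1)`. -/
def poch (a : ℝ) (n : ℕ) : ℝ := ∏ i ∈ Finset.range n, (a + i)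

/-- The Gauss hypergeometric series `F(a,b;c;z) = ∑ (a)_n (b)_n zⁿ / ((c)_n n!)`. -/
def gaussF (a b c z : ℝ) : ℝ :=
  ∑' n : ℕ, poch a n * poch b n / (poch c n * n.factorial) * z ^ n

/-- The region `H = {(x,y,z) : 0 < z < x − y, 0 < y < x}`. -/
def regH : Set (ℝ × ℝ × ℝ) :=
  {w | 0 < w.2.2 ∧ w.2.2 < w.1 - w.2.1 ∧ 0 < w.2.1 ∧ w.2.1 < w.1}

/-- The Riemann function (5) for the equation (1), with pole `(x₀, y₀, z₀)`
(the variable `z₀` does not enter the formula). -/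
def riemannV (p lam x₀ y₀ : ℝ) (x y z : ℝ) : ℝ :=
  (x - y - z) ^ (2 * p) * (x - y₀ - z) ^ (-p) * (x₀ - y - z) ^ (-p) *
    ∑' m : ℕ, (lam * (x₀ - x) * (y₀ - y)) ^ m / (poch 1 m * m.factorial) *
      gaussF p (p + m) (1 + m) ((x - x₀) * (y₀ - y) / ((x - y₀ - z) * (x₀ - y - z)))

/-!
On the face `x = x₀` both the argument `λ (x₀ - x)(y₀ - y)` of the outer series and the argument
of `F` vanish, so the series sums to `1` and `V(x₀, y, z) = (x₀ - y₀ - z)^(-p) (x₀ - y - z)^p`.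
The characteristic condition is then the logarithmic derivative of `(x₀ - y - z)^p` in `y`.
-/

lemma gaussF_zero (a b c : ℝ) : gaussF a b c 0 = 1 := by
  rw [gaussF, tsum_eq_single 0]
  · simp [poch]
  · intro n hn
    simp [zero_pow hn]

lemma riemannV_face (p lam x₀ y₀ y z : ℝ) (h : 0 < x₀ - y - z) :
    riemannV p lam x₀ y₀ x₀ y z = (x₀ - y₀ - z) ^ (-p) * (x₀ - y - z) ^ p := by
  have hseries : ∑' m : ℕ, (lam * (x₀ - x₀) * (y₀ - y)) ^ m / (poch 1 m * m.factorial) *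
      gaussF p (p + m) (1 + m) ((x₀ - x₀) * (y₀ - y) / ((x₀ - y₀ - z) * (x₀ - y - z))) = 1 := by
    rw [tsum_eq_single 0]
    · simp [poch, gaussF_zero]
    · intro m hm
      simp [zero_pow hm]
  have hpow : (x₀ - y - z) ^ (2 * p) * (x₀ - y - z) ^ (-p) = (x₀ - y - z) ^ p := by
    rw [← rpow_add h]
    ring_nf
  rw [riemannV, hseries, mul_one, mul_right_comm, hpow, mul_comm]

lemma hasDerivAt_riemannV_face (p lam x₀ y₀ y z : ℝ) (h : 0 < x₀ - y - z) :
    HasDerivAt (fun t => riemannV p lam x₀ y₀ x₀ t z)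
      (-(p / (x₀ - y - z)) * riemannV p lam x₀ y₀ x₀ y z) y := by
  have hface : (fun t => (x₀ - y₀ - z) ^ (-p) * (x₀ - t - z) ^ p) =ᶠ[𝓝 y]
      fun t => riemannV p lam x₀ y₀ x₀ t z := by
    have hpos : ∀ᶠ t in 𝓝 y, 0 < x₀ - t - z :=
      (continuous_const.sub continuous_id |>.sub continuous_const).continuousAt.eventually
        (eventually_gt_nhds h)
    filter_upwards [hpos] with t ht
    rw [riemannV_face p lam x₀ y₀ t z ht]
  have hlin : HasDerivAt (fun t : ℝ => x₀ - t - z) (-1) y := by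
    simpa using ((hasDerivAt_id y).const_sub x₀).sub_const z
  have hderiv := (hlin.rpow_const (p := p) (Or.inl h.ne')).const_mul ((x₀ - y₀ - z) ^ (-p))
  refine (hderiv.congr_of_eventuallyEq hface.symm).congr_deriv ?_
  rw [riemannV_face p lam x₀ y₀ y z h, rpow_sub h, rpow_one]
  field_simp

theorem riemann_char_x_general (p lam : ℝ)
    (x₀ y₀ z₀ : ℝ) :
    ∀ y z : ℝ, y₀ ≤ y → z₀ ≤ z → y + z < x₀ →
      deriv (fun t => riemannV p lam x₀ y₀ x₀ t z) y =
        -(p / (x₀ - y - z)) * riemannV p lam x₀ y₀ x₀ y z := by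
  intro y z _ _ hyz
  exact (hasDerivAt_riemannV_face p lam x₀ y₀ y z (by linarith)).deriv

/-- On the characteristic face `x = x₀`, the Riemann function satisfies
`V_y = a V`, i.e. `∂V/∂y (x₀,y,z) = −(p/(x₀−y−z)) V(x₀,y,z)`. -/
theorem riemann_char_x (p lam : ℝ) (hp0 : 0 < p) (hp : p < 1 / 2)
    (x₀ y₀ z₀ : ℝ) (h₀ : (x₀, y₀, z₀) ∈ regH) :
    ∀ y z : ℝ, y₀ ≤ y → z₀ ≤ z → y + z < x₀ →
      deriv (fun t => riemannV p lam x₀ y₀ x₀ t z) y =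
        -(p / (x₀ - y - z)) * riemannV p lam x₀ y₀ x₀ y z :=
  riemann_char_x_general p lam x₀ y₀ z₀
end
end

section
/- Let p, λ ∈ ℝ and let Ω ⊆ {(x,y,z) ∈ ℝ³ : x − y − z > 0} be open. Set a(x,y,z) = −p/(x−y−z) and b(x,y,z) = p/(x−y−z), and for three times continuously differentiable functions U, V on Ω define L(U) = U_xyz + a U_xz + b U_yz − λ U_z, L*(V) = −V_xyz + (aV)_xz + (bV)_yz + λ V_z, P = V U_yz + U V_yz − V_y U_z + 3 a V U_z, Q = V (U_xz − 3 b_z U) + U V_xz − V_z U_x − 3 b U V_z, and H = V (U_xy − 3 a_x U + 3 b U_y) − V_x U_y − 3 a U V_x + V_xy U − 3 λ U V. Then the Green identity V L(U) − U L*(V) = (1/3) (∂P/∂x + ∂Q/∂y + ∂H/∂z) holds at every point of Ω. -/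
open Real MeasureTheory Filter Topology

noncomputable section

/-- Partial derivative of `U(x,y,z)` in the first variable. -/
def pdx (U : ℝ → ℝ → ℝ → ℝ) (x y z : ℝ) : ℝ := deriv (fun t => U t y z) x

/-- Partial derivative of `U(x,y,z)` in the second variable. -/
def pdy (U : ℝ → ℝ → ℝ → ℝ) (x y z : ℝ) : ℝ := deriv (fun t => U x t z) y

/-- Partial derivative of `U(x,y,z)` in the third variable. -/
def pdz (U : ℝ → ℝ → ℝ → ℝ) (x y z : ℝ) : ℝ := deriv (fun t => U x y t) z

/-- `L(U) = U_xyz + a U_xz + b U_yz − λ U_z` with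
`a = −p/(x−y−z)` and `b = p/(x−y−z)`. -/
def Lop (p lam : ℝ) (U : ℝ → ℝ → ℝ → ℝ) (x y z : ℝ) : ℝ :=
  pdz (pdy (pdx U)) x y z + (-p / (x - y - z)) * pdz (pdx U) x y z
    + p / (x - y - z) * pdz (pdy U) x y z - lam * pdz U x y z

/-- Conjugate operator `L*(V) = −V_xyz + (aV)_xz + (bV)_yz + λ V_z`. -/
def Lstar (p lam : ℝ) (V : ℝ → ℝ → ℝ → ℝ) (x y z : ℝ) : ℝ :=
  - pdz (pdy (pdx V)) x y z
    + pdz (pdx (fun x' y' z' => (-p / (x' - y' - z')) * V x' y' z')) x y z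
    + pdz (pdy (fun x' y' z' => (p / (x' - y' - z')) * V x' y' z')) x y z
    + lam * pdz V x y z

/-- `P = V U_yz + U V_yz − V_y U_z + 3 a V U_z`. -/
def Pfun (p : ℝ) (U V : ℝ → ℝ → ℝ → ℝ) (x y z : ℝ) : ℝ :=
  V x y z * pdz (pdy U) x y z + U x y z * pdz (pdy V) x y z
    - pdy V x y z * pdz U x y z + 3 * (-p / (x - y - z)) * V x y z * pdz U x y z

/-- `Q = V (U_xz − 3 b_z U) + U V_xz − V_z U_x − 3 b U V_z`. -/
def Qfun (p : ℝ) (U V : ℝ → ℝ → ℝ → ℝ) (x y z : ℝ) : ℝ :=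
  V x y z * (pdz (pdx U) x y z - 3 * deriv (fun t => p / (x - y - t)) z * U x y z)
    + U x y z * pdz (pdx V) x y z - pdz V x y z * pdx U x y z
    - 3 * (p / (x - y - z)) * U x y z * pdz V x y z

/-- `H = V (U_xy − 3 a_x U + 3 b U_y) − V_x U_y − 3 a U V_x + V_xy U − 3 λ U V`. -/
def Hfun (p lam : ℝ) (U V : ℝ → ℝ → ℝ → ℝ) (x y z : ℝ) : ℝ :=
  V x y z * (pdy (pdx U) x y z - 3 * deriv (fun t => -p / (t - y - z)) x * U x y z
      + 3 * (p / (x - y - z)) * pdy U x y z)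
    - pdx V x y z * pdy U x y z - 3 * (-p / (x - y - z)) * U x y z * pdx V x y z
    + pdy (pdx V) x y z * U x y z - 3 * lam * U x y z * V x y z

/-!
The identity is a Leibniz-rule computation that holds for arbitrary `C²` coefficients `a`, `b`,
not only for `∓p/(x−y−z)`. Expanding `P_x + Q_y + H_z`, the mixed terms such as `V_x U_yz`
cancel in pairs, and once mixed partials are identified (Clairaut, which needs `U, V ∈ C³`)
what is left is `3 (V L(U) − U L*(V))`. The specific coefficients only enter through their
smoothness on `x − y − z ≠ 0`.
-/

theorem ContDiffAt.eventually_differentiableAt {𝕜 E F : Type*} [NontriviallyNormedField 𝕜]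
    [NormedAddCommGroup E] [NormedSpace 𝕜 E] [NormedAddCommGroup F] [NormedSpace 𝕜 F]
    {f : E → F} {x : E} {n : WithTop ℕ∞} (h : ContDiffAt 𝕜 n f x) (hn : 1 ≤ n) :
    ∀ᶠ y in 𝓝 x, DifferentiableAt 𝕜 f y :=
  ((h.of_le hn).eventually (by simp)).mono fun _ hy => hy.differentiableAt one_ne_zero

def uncurry3 (F : ℝ → ℝ → ℝ → ℝ) (w : ℝ × ℝ × ℝ) : ℝ := F w.1 w.2.1 w.2.2

def IsPartialAlong (D : (ℝ → ℝ → ℝ → ℝ) → ℝ → ℝ → ℝ → ℝ) (v : ℝ × ℝ × ℝ) : Prop :=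
  ∀ F w, DifferentiableAt ℝ (uncurry3 F) w → uncurry3 (D F) w = fderiv ℝ (uncurry3 F) w v

section Slices

variable {F : ℝ → ℝ → ℝ → ℝ} {x y z : ℝ}

theorem hasDerivAt_pdx (h : DifferentiableAt ℝ (uncurry3 F) (x, y, z)) :
    HasDerivAt (fun t => F t y z) (pdx F x y z) x :=
  (h.comp (f := fun t : ℝ => ((t, y, z) : ℝ × ℝ × ℝ)) x (by fun_prop)).hasDerivAt

theorem hasDerivAt_pdy (h : DifferentiableAt ℝ (uncurry3 F) (x, y, z)) :
    HasDerivAt (fun t => F x t z) (pdy F x y z) y :=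
  (h.comp (f := fun t : ℝ => ((x, t, z) : ℝ × ℝ × ℝ)) y (by fun_prop)).hasDerivAt

theorem hasDerivAt_pdz (h : DifferentiableAt ℝ (uncurry3 F) (x, y, z)) :
    HasDerivAt (fun t => F x y t) (pdz F x y z) z :=
  (h.comp (f := fun t : ℝ => ((x, y, t) : ℝ × ℝ × ℝ)) z (by fun_prop)).hasDerivAt

end Slices

theorem isPartialAlong_pdx : IsPartialAlong pdx (1, 0, 0) := by
  rintro F ⟨x, y, z⟩ h
  exact (h.hasFDerivAt.comp_hasDerivAt x
    ((hasDerivAt_id x).prodMk ((hasDerivAt_const x y).prodMk (hasDerivAt_const x z)))).deriv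

theorem isPartialAlong_pdy : IsPartialAlong pdy (0, 1, 0) := by
  rintro F ⟨x, y, z⟩ h
  exact (h.hasFDerivAt.comp_hasDerivAt y
    ((hasDerivAt_const y x).prodMk ((hasDerivAt_id y).prodMk (hasDerivAt_const y z)))).deriv

theorem isPartialAlong_pdz : IsPartialAlong pdz (0, 0, 1) := by
  rintro F ⟨x, y, z⟩ h
  exact (h.hasFDerivAt.comp_hasDerivAt z
    ((hasDerivAt_const z x).prodMk ((hasDerivAt_const z y).prodMk (hasDerivAt_id z)))).deriv

namespace IsPartialAlong

variable {D D₁ D₂ : (ℝ → ℝ → ℝ → ℝ) → ℝ → ℝ → ℝ → ℝ} {u v : ℝ × ℝ × ℝ}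
  {F G : ℝ → ℝ → ℝ → ℝ} {w : ℝ × ℝ × ℝ} {x y z : ℝ} {m n : WithTop ℕ∞}

theorem eventuallyEq_fderiv (hD : IsPartialAlong D v) (hF : ContDiffAt ℝ n (uncurry3 F) w)
    (hn : 1 ≤ n) : uncurry3 (D F) =ᶠ[𝓝 w] fun w' => fderiv ℝ (uncurry3 F) w' v :=
  (hF.eventually_differentiableAt hn).mono fun w' h => hD F w' h

theorem contDiffAt (hD : IsPartialAlong D v) (hF : ContDiffAt ℝ n (uncurry3 F) w)
    (hmn : m + 1 ≤ n) : ContDiffAt ℝ m (uncurry3 (D F)) w :=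
  ((hF.fderiv_right hmn).clm_apply contDiffAt_const).congr_of_eventuallyEq
    (hD.eventuallyEq_fderiv hF (le_add_self.trans hmn))

theorem congr (hD : IsPartialAlong D v) (hF : DifferentiableAt ℝ (uncurry3 F) (x, y, z))
    (h : uncurry3 F =ᶠ[𝓝 (x, y, z)] uncurry3 G) : D F x y z = D G x y z := by
  change uncurry3 (D F) (x, y, z) = uncurry3 (D G) (x, y, z)
  rw [hD F _ hF, hD G _ (hF.congr_of_eventuallyEq h.symm), h.fderiv_eq]

theorem mul (hD : IsPartialAlong D v) (hF : DifferentiableAt ℝ (uncurry3 F) (x, y, z))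
    (hG : DifferentiableAt ℝ (uncurry3 G) (x, y, z)) :
    D (fun x y z => F x y z * G x y z) x y z = D F x y z * G x y z + F x y z * D G x y z := by
  change uncurry3 (D _) (x, y, z) = uncurry3 (D F) (x, y, z) * uncurry3 G (x, y, z)
    + uncurry3 F (x, y, z) * uncurry3 (D G) (x, y, z)
  rw [hD (fun x y z => F x y z * G x y z) _ (hF.mul hG), hD F _ hF, hD G _ hG]
  change fderiv ℝ (uncurry3 F * uncurry3 G) _ v = _
  rw [fderiv_mul hF hG]
  simp only [add_apply, smul_apply, smul_eq_mul]
  ring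

theorem apply_apply (hD₁ : IsPartialAlong D₁ u) (hD₂ : IsPartialAlong D₂ v)
    (hF : ContDiffAt ℝ 2 (uncurry3 F) w) :
    uncurry3 (D₂ (D₁ F)) w = fderiv ℝ (fderiv ℝ (uncurry3 F)) w v u := by
  have hF' : ContDiffAt ℝ 1 (fderiv ℝ (uncurry3 F)) w := hF.fderiv_right (by norm_num)
  rw [hD₂ _ _ ((hD₁.contDiffAt hF (m := 1) (by norm_num)).differentiableAt one_ne_zero),
    (hD₁.eventuallyEq_fderiv hF (by norm_num)).fderiv_eq,
    fderiv_clm_apply (hF'.differentiableAt one_ne_zero) (differentiableAt_const u)]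
  simp

theorem comm (hD₁ : IsPartialAlong D₁ u) (hD₂ : IsPartialAlong D₂ v)
    (hF : ContDiffAt ℝ 2 (uncurry3 F) (x, y, z)) : D₂ (D₁ F) x y z = D₁ (D₂ F) x y z := by
  change uncurry3 (D₂ (D₁ F)) (x, y, z) = uncurry3 (D₁ (D₂ F)) (x, y, z)
  rw [hD₁.apply_apply hD₂ hF, hD₂.apply_apply hD₁ hF, (hF.isSymmSndFDerivAt (by simp)).eq]

end IsPartialAlong

section Partials

variable {F G : ℝ → ℝ → ℝ → ℝ} {x y z : ℝ} {w : ℝ × ℝ × ℝ} {m n : WithTop ℕ∞}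

theorem ContDiffAt.pdx (h : ContDiffAt ℝ n (uncurry3 F) w) (hmn : m + 1 ≤ n := by norm_num) :
    ContDiffAt ℝ m (uncurry3 (pdx F)) w :=
  isPartialAlong_pdx.contDiffAt h hmn

theorem ContDiffAt.pdy (h : ContDiffAt ℝ n (uncurry3 F) w) (hmn : m + 1 ≤ n := by norm_num) :
    ContDiffAt ℝ m (uncurry3 (pdy F)) w :=
  isPartialAlong_pdy.contDiffAt h hmn

theorem ContDiffAt.pdz (h : ContDiffAt ℝ n (uncurry3 F) w) (hmn : m + 1 ≤ n := by norm_num) :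
    ContDiffAt ℝ m (uncurry3 (pdz F)) w :=
  isPartialAlong_pdz.contDiffAt h hmn

theorem pdx_pdy_comm (hF : ContDiffAt ℝ 2 (uncurry3 F) (x, y, z)) :
    pdx (pdy F) x y z = pdy (pdx F) x y z :=
  isPartialAlong_pdy.comm isPartialAlong_pdx hF

theorem pdx_pdz_comm (hF : ContDiffAt ℝ 2 (uncurry3 F) (x, y, z)) :
    pdx (pdz F) x y z = pdz (pdx F) x y z :=
  isPartialAlong_pdz.comm isPartialAlong_pdx hF

theorem pdy_pdz_comm (hF : ContDiffAt ℝ 2 (uncurry3 F) (x, y, z)) :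
    pdy (pdz F) x y z = pdz (pdy F) x y z :=
  isPartialAlong_pdz.comm isPartialAlong_pdy hF

theorem pdx_pdz_pdy_eq (hF : ContDiffAt ℝ 3 (uncurry3 F) (x, y, z)) :
    pdx (pdz (pdy F)) x y z = pdz (pdy (pdx F)) x y z := by
  rw [pdx_pdz_comm (hF.pdy (m := 2))]
  refine isPartialAlong_pdz.congr
    (((hF.pdy (m := 2)).pdx (m := 1)).differentiableAt one_ne_zero) ?_
  filter_upwards [(hF.of_le (by norm_num : (2 : WithTop ℕ∞) ≤ 3)).eventually (by simp)]
    with ⟨x', y', z'⟩ hF'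
  exact pdx_pdy_comm hF'

theorem IsPartialAlong.pdz_mul {D : (ℝ → ℝ → ℝ → ℝ) → ℝ → ℝ → ℝ → ℝ} {v : ℝ × ℝ × ℝ}
    (hD : IsPartialAlong D v) (hF : ContDiffAt ℝ 2 (uncurry3 F) (x, y, z))
    (hG : ContDiffAt ℝ 2 (uncurry3 G) (x, y, z)) :
    pdz (D fun x y z => F x y z * G x y z) x y z =
      pdz (D F) x y z * G x y z + D F x y z * pdz G x y z
        + (pdz F x y z * D G x y z + F x y z * pdz (D G) x y z) := by
  have hDF : ContDiffAt ℝ 1 (uncurry3 (D F)) (x, y, z) := hD.contDiffAt hF (by norm_num)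
  have hDG : ContDiffAt ℝ 1 (uncurry3 (D G)) (x, y, z) := hD.contDiffAt hG (by norm_num)
  have hprod : uncurry3 (D fun x y z => F x y z * G x y z) =ᶠ[𝓝 (x, y, z)]
      uncurry3 fun x y z => D F x y z * G x y z + F x y z * D G x y z := by
    filter_upwards [hF.eventually_differentiableAt (by norm_num),
      hG.eventually_differentiableAt (by norm_num)] with ⟨x', y', z'⟩ hF' hG'
    exact hD.mul hF' hG'
  rw [isPartialAlong_pdz.congr ((hD.contDiffAt (F := fun x y z => F x y z * G x y z)
    (hF.mul hG) (m := 1) (by norm_num)).differentiableAt one_ne_zero) hprod]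
  exact (((hasDerivAt_pdz (hDF.differentiableAt one_ne_zero)).fun_mul
    (hasDerivAt_pdz (hG.differentiableAt two_ne_zero))).fun_add
    ((hasDerivAt_pdz (hF.differentiableAt two_ne_zero)).fun_mul
    (hasDerivAt_pdz (hDG.differentiableAt one_ne_zero)))).deriv

end Partials

section Green

/- `Lop`, `Lstar`, `Pfun`, `Qfun`, `Hfun` with the coefficients replaced by arbitrary functions
`a`, `b`; at `a = -p/(x-y-z)`, `b = p/(x-y-z)` they unfold to the originals. -/

variable (a b : ℝ → ℝ → ℝ → ℝ) (lam : ℝ) (U V : ℝ → ℝ → ℝ → ℝ) (x y z : ℝ)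

def LopGen : ℝ :=
  pdz (pdy (pdx U)) x y z + a x y z * pdz (pdx U) x y z
    + b x y z * pdz (pdy U) x y z - lam * pdz U x y z

def LstarGen : ℝ :=
  - pdz (pdy (pdx V)) x y z
    + pdz (pdx (fun x' y' z' => a x' y' z' * V x' y' z')) x y z
    + pdz (pdy (fun x' y' z' => b x' y' z' * V x' y' z')) x y z
    + lam * pdz V x y z

def PfunGen : ℝ :=
  V x y z * pdz (pdy U) x y z + U x y z * pdz (pdy V) x y z
    - pdy V x y z * pdz U x y z + 3 * a x y z * V x y z * pdz U x y z

def QfunGen : ℝ :=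
  V x y z * (pdz (pdx U) x y z - 3 * pdz b x y z * U x y z)
    + U x y z * pdz (pdx V) x y z - pdz V x y z * pdx U x y z
    - 3 * b x y z * U x y z * pdz V x y z

def HfunGen : ℝ :=
  V x y z * (pdy (pdx U) x y z - 3 * pdx a x y z * U x y z + 3 * b x y z * pdy U x y z)
    - pdx V x y z * pdy U x y z - 3 * a x y z * U x y z * pdx V x y z
    + pdy (pdx V) x y z * U x y z - 3 * lam * U x y z * V x y z

variable {a b lam U V x y z}

theorem pdx_PfunGen (ha : DifferentiableAt ℝ (uncurry3 a) (x, y, z))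
    (hU : ContDiffAt ℝ 3 (uncurry3 U) (x, y, z)) (hV : ContDiffAt ℝ 3 (uncurry3 V) (x, y, z)) :
    pdx (PfunGen a U V) x y z =
      pdx V x y z * pdz (pdy U) x y z + V x y z * pdx (pdz (pdy U)) x y z
        + (pdx U x y z * pdz (pdy V) x y z + U x y z * pdx (pdz (pdy V)) x y z)
        - (pdx (pdy V) x y z * pdz U x y z + pdy V x y z * pdx (pdz U) x y z)
        + 3 * (pdx a x y z * V x y z * pdz U x y z + a x y z * pdx V x y z * pdz U x y z
          + a x y z * V x y z * pdx (pdz U) x y z) := by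
  have da := hasDerivAt_pdx ha
  have dU := hasDerivAt_pdx (hU.differentiableAt (by norm_num))
  have dV := hasDerivAt_pdx (hV.differentiableAt (by norm_num))
  have dUz := hasDerivAt_pdx ((hU.pdz (m := 1)).differentiableAt one_ne_zero)
  have dVy := hasDerivAt_pdx ((hV.pdy (m := 1)).differentiableAt one_ne_zero)
  have dUyz := hasDerivAt_pdx (((hU.pdy (m := 2)).pdz (m := 1)).differentiableAt one_ne_zero)
  have dVyz := hasDerivAt_pdx (((hV.pdy (m := 2)).pdz (m := 1)).differentiableAt one_ne_zero)
  rw [pdx]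
  unfold PfunGen
  rw [((((dV.fun_mul dUyz).fun_add (dU.fun_mul dVyz)).fun_sub (dVy.fun_mul dUz)).fun_add
    (((da.const_mul 3).fun_mul dV).fun_mul dUz)).deriv]
  ring

theorem pdy_QfunGen (hb : ContDiffAt ℝ 2 (uncurry3 b) (x, y, z))
    (hU : ContDiffAt ℝ 3 (uncurry3 U) (x, y, z)) (hV : ContDiffAt ℝ 3 (uncurry3 V) (x, y, z)) :
    pdy (QfunGen b U V) x y z =
      pdy V x y z * (pdz (pdx U) x y z - 3 * pdz b x y z * U x y z)
        + V x y z * (pdy (pdz (pdx U)) x y z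
          - 3 * (pdy (pdz b) x y z * U x y z + pdz b x y z * pdy U x y z))
        + (pdy U x y z * pdz (pdx V) x y z + U x y z * pdy (pdz (pdx V)) x y z)
        - (pdy (pdz V) x y z * pdx U x y z + pdz V x y z * pdy (pdx U) x y z)
        - 3 * (pdy b x y z * U x y z * pdz V x y z + b x y z * pdy U x y z * pdz V x y z
          + b x y z * U x y z * pdy (pdz V) x y z) := by
  have db := hasDerivAt_pdy (hb.differentiableAt (by norm_num))
  have dU := hasDerivAt_pdy (hU.differentiableAt (by norm_num))
  have dV := hasDerivAt_pdy (hV.differentiableAt (by norm_num))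
  have dbz := hasDerivAt_pdy ((hb.pdz (m := 1)).differentiableAt one_ne_zero)
  have dUx := hasDerivAt_pdy ((hU.pdx (m := 1)).differentiableAt one_ne_zero)
  have dVz := hasDerivAt_pdy ((hV.pdz (m := 1)).differentiableAt one_ne_zero)
  have dUxz := hasDerivAt_pdy (((hU.pdx (m := 2)).pdz (m := 1)).differentiableAt one_ne_zero)
  have dVxz := hasDerivAt_pdy (((hV.pdx (m := 2)).pdz (m := 1)).differentiableAt one_ne_zero)
  rw [pdy]
  unfold QfunGen
  rw [((((dV.fun_mul (dUxz.fun_sub ((dbz.const_mul 3).fun_mul dU))).fun_add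
    (dU.fun_mul dVxz)).fun_sub (dVz.fun_mul dUx)).fun_sub
    (((db.const_mul 3).fun_mul dU).fun_mul dVz)).deriv]
  ring

theorem pdz_HfunGen (ha : ContDiffAt ℝ 2 (uncurry3 a) (x, y, z))
    (hb : DifferentiableAt ℝ (uncurry3 b) (x, y, z))
    (hU : ContDiffAt ℝ 3 (uncurry3 U) (x, y, z)) (hV : ContDiffAt ℝ 3 (uncurry3 V) (x, y, z)) :
    pdz (HfunGen a b lam U V) x y z =
      pdz V x y z * (pdy (pdx U) x y z - 3 * pdx a x y z * U x y z + 3 * b x y z * pdy U x y z)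
        + V x y z * (pdz (pdy (pdx U)) x y z
          - 3 * (pdz (pdx a) x y z * U x y z + pdx a x y z * pdz U x y z)
          + 3 * (pdz b x y z * pdy U x y z + b x y z * pdz (pdy U) x y z))
        - (pdz (pdx V) x y z * pdy U x y z + pdx V x y z * pdz (pdy U) x y z)
        - 3 * (pdz a x y z * U x y z * pdx V x y z + a x y z * pdz U x y z * pdx V x y z
          + a x y z * U x y z * pdz (pdx V) x y z)
        + (pdz (pdy (pdx V)) x y z * U x y z + pdy (pdx V) x y z * pdz U x y z)
        - 3 * lam * (pdz U x y z * V x y z + U x y z * pdz V x y z) := by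
  have da := hasDerivAt_pdz (ha.differentiableAt (by norm_num))
  have db := hasDerivAt_pdz hb
  have dU := hasDerivAt_pdz (hU.differentiableAt (by norm_num))
  have dV := hasDerivAt_pdz (hV.differentiableAt (by norm_num))
  have dax := hasDerivAt_pdz ((ha.pdx (m := 1)).differentiableAt one_ne_zero)
  have dUy := hasDerivAt_pdz ((hU.pdy (m := 1)).differentiableAt one_ne_zero)
  have dVx := hasDerivAt_pdz ((hV.pdx (m := 1)).differentiableAt one_ne_zero)
  have dUxy := hasDerivAt_pdz (((hU.pdx (m := 2)).pdy (m := 1)).differentiableAt one_ne_zero)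
  have dVxy := hasDerivAt_pdz (((hV.pdx (m := 2)).pdy (m := 1)).differentiableAt one_ne_zero)
  have dFirst := dV.fun_mul
    ((dUxy.fun_sub ((dax.const_mul 3).fun_mul dU)).fun_add ((db.const_mul 3).fun_mul dUy))
  rw [pdz]
  unfold HfunGen
  rw [((((dFirst.fun_sub (dVx.fun_mul dUy)).fun_sub
    (((da.const_mul 3).fun_mul dU).fun_mul dVx)).fun_add (dVxy.fun_mul dU)).fun_sub
    ((dU.const_mul (3 * lam)).fun_mul dV)).deriv]
  ring

theorem green_identity_of_contDiffAt (ha : ContDiffAt ℝ 2 (uncurry3 a) (x, y, z))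
    (hb : ContDiffAt ℝ 2 (uncurry3 b) (x, y, z))
    (hU : ContDiffAt ℝ 3 (uncurry3 U) (x, y, z)) (hV : ContDiffAt ℝ 3 (uncurry3 V) (x, y, z)) :
    V x y z * LopGen a b lam U x y z - U x y z * LstarGen a b lam V x y z =
      1 / 3 * (pdx (PfunGen a U V) x y z + pdy (QfunGen b U V) x y z
        + pdz (HfunGen a b lam U V) x y z) := by
  have hU2 : ContDiffAt ℝ 2 (uncurry3 U) (x, y, z) := hU.of_le (by norm_num)
  have hV2 : ContDiffAt ℝ 2 (uncurry3 V) (x, y, z) := hV.of_le (by norm_num)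
  rw [pdx_PfunGen (ha.differentiableAt two_ne_zero) hU hV, pdy_QfunGen hb hU hV,
    pdz_HfunGen ha (hb.differentiableAt two_ne_zero) hU hV, LstarGen,
    isPartialAlong_pdx.pdz_mul ha hV2, isPartialAlong_pdy.pdz_mul hb hV2,
    pdx_pdz_pdy_eq hU, pdx_pdz_pdy_eq hV, pdy_pdz_comm (hU.pdx (m := 2)),
    pdy_pdz_comm (hV.pdx (m := 2)), pdx_pdy_comm hV2, pdx_pdz_comm hU2, pdy_pdz_comm hV2,
    pdy_pdz_comm hb, LopGen]
  ring

end Green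

theorem contDiffAt_uncurry3_div_sub_sub (c : ℝ) {x y z : ℝ} (h : x - y - z ≠ 0)
    {n : WithTop ℕ∞} : ContDiffAt ℝ n (uncurry3 fun x y z => c / (x - y - z)) (x, y, z) := by
  change ContDiffAt ℝ n (fun w : ℝ × ℝ × ℝ => c / (w.1 - w.2.1 - w.2.2)) (x, y, z)
  exact contDiffAt_const.div (by fun_prop) h

/-- **Green identity (7):** for three times continuously differentiable `U, V` on an open
set `Ω ⊆ {x − y − z > 0}`, one has
`V L(U) − U L*(V) = (1/3) (P_x + Q_y + H_z)` at every point of `Ω`. -/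
theorem green_identity (p lam : ℝ) (Ω : Set (ℝ × ℝ × ℝ)) (hΩopen : IsOpen Ω)
    (hΩ : Ω ⊆ {w : ℝ × ℝ × ℝ | w.1 - w.2.1 - w.2.2 > 0})
    (U V : ℝ → ℝ → ℝ → ℝ)
    (hU : ContDiffOn ℝ 3 (fun w : ℝ × ℝ × ℝ => U w.1 w.2.1 w.2.2) Ω)
    (hV : ContDiffOn ℝ 3 (fun w : ℝ × ℝ × ℝ => V w.1 w.2.1 w.2.2) Ω) :
    ∀ w ∈ Ω,
      V w.1 w.2.1 w.2.2 * Lop p lam U w.1 w.2.1 w.2.2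
        - U w.1 w.2.1 w.2.2 * Lstar p lam V w.1 w.2.1 w.2.2 =
      (1 / 3) * (pdx (Pfun p U V) w.1 w.2.1 w.2.2
        + pdy (Qfun p U V) w.1 w.2.1 w.2.2
        + pdz (Hfun p lam U V) w.1 w.2.1 w.2.2) := by
  rintro ⟨x, y, z⟩ hw
  have hxyz : x - y - z ≠ 0 := (hΩ hw).ne'
  exact green_identity_of_contDiffAt (contDiffAt_uncurry3_div_sub_sub (-p) hxyz) (contDiffAt_uncurry3_div_sub_sub p hxyz)
    (hU.contDiffAt (hΩopen.mem_nhds hw)) (hV.contDiffAt (hΩopen.mem_nhds hw))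
end
end

section
/- Let 0 < p < 1/2, let k, m be natural numbers with m ≤ k, and let real numbers x, y, s, ξ satisfy ξ < y and y + s < x. Then ∫_{y+s}^{x} (x−t)^{p−1+k−m} (t−s−y)^{p−1+k−m} (t−ξ−s)^{−2p+2m} dt = (Γ(p)²/Γ(2p)) · ((p)_{k−m})²/(2p)_{2k−2m} · (x−y−s)^{2p−1+2k−2m} (x−ξ−s)^{−2p+2m} · F(2p−2m, p+k−m; 2p+2k−2m; (x−y−s)/(x−ξ−s)). -/
/-!
The substitution `t = x - u (x - y - s)` turns the integral into Euler's integral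
`∫₀¹ u^(b-1) (1-u)^(c-b-1) (1-zu)^(-a) du` with `a = 2p - 2m`, `b = p + k - m`, `c = 2b` and
`z = (x-y-s)/(x-ξ-s)`. Expanding `(1-zu)^(-a) = ∑ (a)_n/n! (zu)^n` and integrating termwise
(dominated convergence, since `|z| < 1`) against the Beta integrals
`B(b+n, c-b) = Γ(b) Γ(c-b)/Γ(c) · (b)_n/(c)_n` gives `Γ(b) Γ(c-b)/Γ(c) · F(a, b; c; z)`;
it remains to write `Γ(p + j) = Γ(p) (p)_j`.
-/

open Real MeasureTheory intervalIntegral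

noncomputable section

lemma poch_succ (a : ℝ) (n : ℕ) : poch a (n + 1) = poch a n * (a + n) :=
  Finset.prod_range_succ _ _

lemma poch_eq_ascPochhammer_eval (a : ℝ) (n : ℕ) : poch a n = (ascPochhammer ℝ n).eval a := by
  induction n with
  | zero => simp [poch]
  | succ n ih => rw [poch_succ, ih, ascPochhammer_succ_eval]

lemma Gamma_add_nat_eq_Gamma_mul_poch {a : ℝ} (ha : 0 < a) (n : ℕ) :
    Gamma (a + n) = Gamma a * poch a n := by
  induction n with
  | zero => simp [poch]
  | succ n ih =>
    rw [Nat.cast_succ, ← add_assoc, Gamma_add_one (by positivity), ih, poch_succ]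
    ring

lemma choose_add_nat_sub_one_eq_poch_div_factorial (a : ℝ) (n : ℕ) :
    Ring.choose (a + n - 1) n = poch a n / n.factorial := by
  rw [Ring.choose_eq_smul, Polynomial.descPochhammer_smeval_eq_ascPochhammer,
    Polynomial.ascPochhammer_smeval_eq_eval,
    poch_eq_ascPochhammer_eval, smul_eq_mul, div_eq_inv_mul]
  ring_nf

lemma hasSum_poch_div_factorial_mul_pow (α : ℝ) {w : ℝ} (hw : |w| < 1) :
    HasSum (fun n => poch α n / n.factorial * w ^ n) ((1 - w) ^ (-α)) := by
  have h := (one_div_one_sub_rpow_hasFPowerSeriesOnBall_zero α).hasSum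
    (y := w) (by simpa [Real.enorm_eq_ofReal_abs] using hw)
  have h1w : 0 < 1 - w := by linarith [le_abs_self w]
  simpa [FormalMultilinearSeries.ofScalars_apply_eq, choose_add_nat_sub_one_eq_poch_div_factorial,
    rpow_neg h1w.le, mul_comm] using h

lemma summable_abs_poch_div_factorial_mul_pow (α : ℝ) {w : ℝ} (hw : |w| < 1) :
    Summable fun n => |poch α n / n.factorial| * |w| ^ n := by
  have hr := (one_div_one_sub_rpow_hasFPowerSeriesOnBall_zero α).r_le
  have hw' : ((‖w‖₊ : NNReal) : ENNReal) < 1 := by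
    simpa [← enorm_eq_nnnorm, Real.enorm_eq_ofReal_abs] using hw
  simpa [FormalMultilinearSeries.ofScalars_norm, choose_add_nat_sub_one_eq_poch_div_factorial,
    abs_div]
    using FormalMultilinearSeries.summable_norm_mul_pow _ (hw'.trans_le hr)

lemma ofReal_rpow_mul_one_sub_rpow {s t v : ℝ} (hv : v ∈ Set.Icc (0 : ℝ) 1) :
    ((v ^ (s - 1) * (1 - v) ^ (t - 1) : ℝ) : ℂ) =
      (v : ℂ) ^ ((s : ℂ) - 1) * (1 - (v : ℂ)) ^ ((t : ℂ) - 1) := by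
  rw [Complex.ofReal_mul, Complex.ofReal_cpow hv.1, Complex.ofReal_cpow (sub_nonneg.2 hv.2)]
  push_cast
  rfl

lemma intervalIntegrable_rpow_mul_one_sub_rpow {s t : ℝ} (hs : 0 < s) (ht : 0 < t) :
    IntervalIntegrable (fun v : ℝ => v ^ (s - 1) * (1 - v) ^ (t - 1)) volume 0 1 := by
  refine (Complex.betaIntegral_convergent (u := s) (v := t) (by simpa) (by simpa)).norm.congr
    fun v hv => ?_
  rw [Set.uIoc_of_le zero_le_one] at hv
  have hv' : v ∈ Set.Icc (0 : ℝ) 1 := Set.Ioc_subset_Icc_self hv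
  rw [← ofReal_rpow_mul_one_sub_rpow hv', Complex.norm_real, Real.norm_of_nonneg
    (mul_nonneg (rpow_nonneg hv'.1 _) (rpow_nonneg (sub_nonneg.2 hv'.2) _))]

lemma integral_rpow_mul_one_sub_rpow {s t : ℝ} (hs : 0 < s) (ht : 0 < t) :
    ∫ v in (0 : ℝ)..1, v ^ (s - 1) * (1 - v) ^ (t - 1) = Gamma s * Gamma t / Gamma (s + t) := by
  have h := Complex.betaIntegral_eq_Gamma_mul_div s t (by simpa) (by simpa)
  rw [Complex.betaIntegral, ← integral_congr fun v hv => ofReal_rpow_mul_one_sub_rpow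
    (by rwa [Set.uIcc_of_le zero_le_one] at hv), integral_ofReal, ← Complex.ofReal_add,
    Complex.Gamma_ofReal, Complex.Gamma_ofReal, Complex.Gamma_ofReal] at h
  exact_mod_cast h

lemma integral_rpow_mul_one_sub_rpow_mul_pow {b c : ℝ} (hb : 0 < b) (hbc : b < c) (n : ℕ) :
    ∫ v in (0 : ℝ)..1, v ^ (b - 1) * (1 - v) ^ (c - b - 1) * v ^ n =
      Gamma b * Gamma (c - b) / Gamma c * (poch b n / poch c n) := by
  have hmoment : ∀ᵐ v ∂volume, v ∈ Set.uIoc (0 : ℝ) 1 →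
      v ^ (b - 1) * (1 - v) ^ (c - b - 1) * v ^ n = v ^ (b + n - 1) * (1 - v) ^ (c - b - 1) := by
    refine Filter.Eventually.of_forall fun v hv => ?_
    rw [Set.uIoc_of_le zero_le_one] at hv
    rw [mul_right_comm, ← rpow_natCast, ← rpow_add hv.1, sub_add_eq_add_sub]
  rw [integral_congr_ae hmoment, integral_rpow_mul_one_sub_rpow (by positivity) (by linarith),
    show b + n + (c - b) = c + n by ring, Gamma_add_nat_eq_Gamma_mul_poch hb,
    Gamma_add_nat_eq_Gamma_mul_poch (hb.trans hbc)]
  ring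

theorem integral_rpow_mul_one_sub_rpow_mul_one_sub_mul_rpow {a b c z : ℝ} (hb : 0 < b)
    (hbc : b < c) (hz : |z| < 1) :
    ∫ v in (0 : ℝ)..1, v ^ (b - 1) * (1 - v) ^ (c - b - 1) * (1 - z * v) ^ (-a) =
      Gamma b * Gamma (c - b) / Gamma c * gaussF a b c z := by
  set β : ℝ → ℝ := fun v => v ^ (b - 1) * (1 - v) ^ (c - b - 1)
  set coeff : ℕ → ℝ := fun n => poch a n / n.factorial
  have hterms : HasSum (fun n => ∫ v in (0 : ℝ)..1, β v * (coeff n * (z * v) ^ n))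
      (∫ v in (0 : ℝ)..1, β v * (1 - z * v) ^ (-a)) := by
    refine hasSum_integral_of_dominated_convergence (fun n v => β v * (|coeff n| * |z| ^ n))
      (fun n => by fun_prop) (fun n => ?_) ?_ ?_ ?_
    · refine Filter.Eventually.of_forall fun v hv => ?_
      rw [Set.uIoc_of_le zero_le_one] at hv
      have hβv : 0 ≤ β v :=
        mul_nonneg (rpow_nonneg hv.1.le _) (rpow_nonneg (sub_nonneg.2 hv.2) _)
      have hvn : |v| ^ n ≤ 1 := pow_le_one₀ (abs_nonneg v) (by rw [abs_of_pos hv.1]; exact hv.2)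
      rw [norm_mul, Real.norm_of_nonneg hβv, norm_mul, norm_pow, norm_mul, Real.norm_eq_abs,
        Real.norm_eq_abs, Real.norm_eq_abs, mul_pow, ← mul_assoc (|coeff n|)]
      exact mul_le_mul_of_nonneg_left (mul_le_of_le_one_right (by positivity) hvn) hβv
    · exact Filter.Eventually.of_forall fun v _ =>
        (summable_abs_poch_div_factorial_mul_pow a hz).mul_left (β v)
    · simp only [tsum_mul_left]
      exact (intervalIntegrable_rpow_mul_one_sub_rpow hb (sub_pos.2 hbc)).mul_const _
    · refine Filter.Eventually.of_forall fun v hv => ?_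
      rw [Set.uIoc_of_le zero_le_one] at hv
      have hzv : |z * v| < 1 := by
        rw [abs_mul, abs_of_pos hv.1]
        nlinarith [abs_nonneg z, hv.2, hv.1]
      exact (hasSum_poch_div_factorial_mul_pow a hzv).mul_left (β v)
  have hmoments : ∀ n, ∫ v in (0 : ℝ)..1, β v * (coeff n * (z * v) ^ n) =
      Gamma b * Gamma (c - b) / Gamma c *
        (poch a n * poch b n / (poch c n * n.factorial) * z ^ n) := fun n =>
    calc ∫ v in (0 : ℝ)..1, β v * (coeff n * (z * v) ^ n)
        = coeff n * z ^ n * ∫ v in (0 : ℝ)..1, β v * v ^ n := by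
          rw [← intervalIntegral.integral_const_mul]; congr 1; ext v; ring
      _ = _ := by
          rw [integral_rpow_mul_one_sub_rpow_mul_pow hb hbc]; ring
  simp only [hmoments] at hterms
  rw [gaussF, ← tsum_mul_left]
  exact hterms.tsum_eq.symm

lemma integral_sub_rpow_mul_sub_rpow_mul_sub_rpow {x l c e₁ e₂ e₃ : ℝ} (hl : l < x)
    (hc : c < l) :
    ∫ t in l..x, (x - t) ^ e₁ * (t - l) ^ e₂ * (t - c) ^ e₃ =
      (x - l) ^ (e₁ + e₂ + 1) * (x - c) ^ e₃ *
        ∫ u in (0 : ℝ)..1, u ^ e₁ * (1 - u) ^ e₂ * (1 - (x - l) / (x - c) * u) ^ e₃ := by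
  set A := x - l
  set B := x - c
  have hA0 : 0 < A := sub_pos.2 hl
  have hB0 : 0 < B := by linarith
  have hsub := smul_integral_comp_sub_mul (a := 0) (b := 1)
    (fun t => (x - t) ^ e₁ * (t - l) ^ e₂ * (t - c) ^ e₃) A x
  rw [mul_one, mul_zero, sub_zero, show x - A = l by ring] at hsub
  rw [← hsub, smul_eq_mul, ← intervalIntegral.integral_const_mul,
    ← intervalIntegral.integral_const_mul]
  refine integral_congr fun u hu => ?_
  rw [Set.uIcc_of_le zero_le_one] at hu
  have hzu : 0 ≤ 1 - A / B * u := by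
    have : A / B ≤ 1 := (div_le_one hB0).2 (by linarith)
    nlinarith [hu.1, hu.2, div_pos hA0 hB0]
  rw [show x - (x - A * u) = A * u by ring, show x - A * u - l = A * (1 - u) by ring,
    show x - A * u - c = B * (1 - A / B * u) by field_simp; ring,
    mul_rpow hA0.le hu.1, mul_rpow hA0.le (sub_nonneg.2 hu.2), mul_rpow hB0.le hzu,
    rpow_add hA0, rpow_add hA0, rpow_one]
  ring

theorem aux_integral_eval_general (p : ℝ) (hp0 : 0 < p)
    (k m : ℕ) (hmk : m ≤ k) (x y s ξ : ℝ) (hξ : ξ < y) (hyx : y + s < x) :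
    (∫ t in (y + s)..x, (x - t) ^ (p - 1 + (k : ℝ) - (m : ℝ)) *
        (t - s - y) ^ (p - 1 + (k : ℝ) - (m : ℝ)) *
        (t - ξ - s) ^ (-(2 * p) + 2 * (m : ℝ))) =
      (Real.Gamma p) ^ 2 / Real.Gamma (2 * p) *
        ((poch p (k - m)) ^ 2 / poch (2 * p) (2 * (k - m))) *
        (x - y - s) ^ (2 * p - 1 + 2 * (k : ℝ) - 2 * (m : ℝ)) *
        (x - ξ - s) ^ (-(2 * p) + 2 * (m : ℝ)) *
        gaussF (2 * p - 2 * (m : ℝ)) (p + (k : ℝ) - (m : ℝ))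
          (2 * p + 2 * (k : ℝ) - 2 * (m : ℝ)) ((x - y - s) / (x - ξ - s)) := by
  set n := k - m
  have hn : (k : ℝ) - m = n := by rw [Nat.cast_sub hmk]
  set a := p + n
  have ha : 0 < a := by positivity
  have hz : |(x - (y + s)) / (x - (ξ + s))| < 1 := by
    rw [abs_lt, lt_div_iff₀ (by linarith), div_lt_one (by linarith)]
    constructor <;> linarith
  have heuler := integral_rpow_mul_one_sub_rpow_mul_one_sub_mul_rpow (a := 2 * p - 2 * m)
    ha (show a < 2 * a by linarith) hz
  rw [show 2 * a - a - 1 = a - 1 by ring, show 2 * a - a = a by ring] at heuler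
  rw [show p - 1 + (k : ℝ) - m = a - 1 by linarith,
    show 2 * p - 1 + 2 * (k : ℝ) - 2 * m = a - 1 + (a - 1) + 1 by linarith,
    show p + (k : ℝ) - m = a by linarith, show 2 * p + 2 * (k : ℝ) - 2 * m = 2 * a by linarith,
    show -(2 * p) + 2 * (m : ℝ) = -(2 * p - 2 * m) by ring]
  simp only [sub_sub, add_comm s y]
  rw [integral_sub_rpow_mul_sub_rpow_mul_sub_rpow hyx (by linarith), heuler,
    show 2 * a = 2 * p + (2 * n : ℕ) by push_cast; ring, Gamma_add_nat_eq_Gamma_mul_poch hp0,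
    Gamma_add_nat_eq_Gamma_mul_poch (by positivity)]
  ring

/-- Evaluation of the auxiliary integral `i` through the Gauss hypergeometric function:
`∫_{y+s}^{x} (x−t)^{p−1+k−m} (t−s−y)^{p−1+k−m} (t−ξ−s)^{−2p+2m} dt
  = (Γ(p)²/Γ(2p)) ((p)_{k−m})²/(2p)_{2k−2m} (x−y−s)^{2p−1+2k−2m} (x−ξ−s)^{−2p+2m}
    F(2p−2m, p+k−m; 2p+2k−2m; (x−y−s)/(x−ξ−s))`. -/
theorem aux_integral_eval (p : ℝ) (hp0 : 0 < p) (hp : p < 1 / 2)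
    (k m : ℕ) (hmk : m ≤ k) (x y s ξ : ℝ) (hξ : ξ < y) (hyx : y + s < x) :
    (∫ t in (y + s)..x, (x - t) ^ (p - 1 + (k : ℝ) - (m : ℝ)) *
        (t - s - y) ^ (p - 1 + (k : ℝ) - (m : ℝ)) *
        (t - ξ - s) ^ (-(2 * p) + 2 * (m : ℝ))) =
      (Real.Gamma p) ^ 2 / Real.Gamma (2 * p) *
        ((poch p (k - m)) ^ 2 / poch (2 * p) (2 * (k - m))) *
        (x - y - s) ^ (2 * p - 1 + 2 * (k : ℝ) - 2 * (m : ℝ)) *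
        (x - ξ - s) ^ (-(2 * p) + 2 * (m : ℝ)) *
        gaussF (2 * p - 2 * (m : ℝ)) (p + (k : ℝ) - (m : ℝ))
          (2 * p + 2 * (k : ℝ) - 2 * (m : ℝ)) ((x - y - s) / (x - ξ - s)) :=
  aux_integral_eval_general p hp0 k m hmk x y s ξ hξ hyx
end
end

section
/- Let 0 < p < 1/2 and λ ∈ ℝ. If a function U of the class W_p (with continuous functions T and N and data τ) satisfies the boundary condition U(x,0,z) = φ(x,z) for 0 ≤ z ≤ x, where τ(x,0) = 0, then N satisfies the two-dimensional Volterra integral equation of the first kind −∫_z^x ∫_0^{x−s} N(s,ξ) ξ^{−p} (x−ξ−s)^{−p} ₀F₁(1−p; −λ(x−ξ−s)ξ) dξ ds = φ(x,z) for all 0 ≤ z ≤ x. -/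
open Real MeasureTheory intervalIntegral

noncomputable section

/-- The confluent hypergeometric function `₀F₁(a; z) = ∑ zⁿ / ((a)_n n!)`. -/
def F01 (a z : ℝ) : ℝ := ∑' n : ℕ, z ^ n / (poch a n * n.factorial)

/-- The region `D = {(x,y) : 0 < y < x}`. -/
def regD : Set (ℝ × ℝ) := {w | 0 < w.2 ∧ w.2 < w.1}

/-- The form (27) of elements of the class `W_p` (case `0 < p < 1/2`). -/
def Wform (p lam : ℝ) (τ T N : ℝ → ℝ → ℝ) (x y z : ℝ) : ℝ :=
  τ x y
    - (∫ s in z..(x - y), ∫ ξ in (0 : ℝ)..y,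
        T s ξ * (y - ξ) ^ (-p) * (x - ξ - s) ^ (-p) *
          F01 (1 - p) (lam * (y - ξ) * (x - ξ - s)))
    - ∫ s in z..(x - y), ∫ ξ in y..(x - s),
        N s ξ * (x - ξ - s) ^ (-p) * (ξ - y) ^ (-p) *
          F01 (1 - p) (lam * (y - ξ) * (x - ξ - s))

theorem Wform_y_zero (p lam : ℝ) (τ T N : ℝ → ℝ → ℝ) (x z : ℝ) :
    Wform p lam τ T N x 0 z =
      τ x 0 - ∫ s in z..x, ∫ ξ in (0 : ℝ)..(x - s),
        N s ξ * ξ ^ (-p) * (x - ξ - s) ^ (-p) * F01 (1 - p) (-lam * (x - ξ - s) * ξ) := by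
  simp only [Wform, sub_zero, intervalIntegral.integral_same, intervalIntegral.integral_zero]
  congr 1
  refine intervalIntegral.integral_congr fun s _ => intervalIntegral.integral_congr fun ξ _ => ?_
  ring_nf

theorem reduction_to_volterra_general (p lam : ℝ)
    (τ T N φ : ℝ → ℝ → ℝ) (U : ℝ → ℝ → ℝ → ℝ)
    (hU : ∀ x y z : ℝ, U x y z = Wform p lam τ T N x y z)
    (hτ0 : ∀ x : ℝ, τ x 0 = 0)
    (hbc : ∀ x z : ℝ, 0 ≤ z → z ≤ x → U x 0 z = φ x z) :
    ∀ x z : ℝ, 0 ≤ z → z ≤ x →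
      -(∫ s in z..x, ∫ ξ in (0 : ℝ)..(x - s),
          N s ξ * ξ ^ (-p) * (x - ξ - s) ^ (-p) *
            F01 (1 - p) (-lam * (x - ξ - s) * ξ)) = φ x z := by
  intro x z hz hxz
  rw [← hbc x z hz hxz, hU, Wform_y_zero, hτ0, zero_sub]

/-- Setting `y = 0` in a function of the class `W_p` with `τ(x,0) = 0` and
subordinating it to the boundary condition `U(x,0,z) = φ(x,z)` reduces the
problem to the two-dimensional Volterra integral equation (36) for `N`. -/
theorem reduction_to_volterra (p lam : ℝ) (hp0 : 0 < p) (hp : p < 1 / 2)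
    (τ T N φ : ℝ → ℝ → ℝ) (U : ℝ → ℝ → ℝ → ℝ)
    (hT : ContinuousOn (fun w : ℝ × ℝ => T w.1 w.2) regD)
    (hN : ContinuousOn (fun w : ℝ × ℝ => N w.1 w.2) regD)
    (hU : ∀ x y z : ℝ, U x y z = Wform p lam τ T N x y z)
    (hτ0 : ∀ x : ℝ, τ x 0 = 0)
    (hbc : ∀ x z : ℝ, 0 ≤ z → z ≤ x → U x 0 z = φ x z) :
    ∀ x z : ℝ, 0 ≤ z → z ≤ x →
      -(∫ s in z..x, ∫ ξ in (0 : ℝ)..(x - s),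
          N s ξ * ξ ^ (-p) * (x - ξ - s) ^ (-p) *
            F01 (1 - p) (-lam * (x - ξ - s) * ξ)) = φ x z :=
  reduction_to_volterra_general p lam τ T N φ U hU hτ0 hbc
end
end
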